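/- Every uniquely ergodic and proximal dynamical system on a compact metric space has the almost specification property. That is, if X is a compact metric space and f : X → X is a continuous map which admits exactly one f-invariant Borel probability measure and for which every pair (x,y) ∈ X × X satisfies liminf_{n→∞} d(f^n(x), f^n(y)) = 0, then f has the almost specification property. -/

import Mathlib

open Filter Metric Set MeasureTheory Topology

section Defs

variable {X : Type*} [MetricSpace X]

/-- The Bowen ball of radius `ε` centered at `x` along a finite set of times `Λ`. -/
def bowenBallAlong (f : X → X) (Λ : Finset ℕ) (x : X) (ε : ℝ) : Set X :=
  {y | ∀ j ∈ Λ, dist (f^[j] x) (f^[j] y) < ε}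

/-- `g` is a mistake function with threshold `ε₀`. -/
structure IsMistakeFun (g : ℕ → ℝ → ℕ) (ε₀ : ℝ) : Prop where
  pos : 0 < ε₀
  mono : ∀ n : ℕ, ∀ ε : ℝ, 0 < ε → ε ≤ ε₀ → g n ε ≤ g (n + 1) ε
  small : ∀ ε : ℝ, 0 < ε → ε ≤ ε₀ →
    Tendsto (fun n : ℕ => (g n ε : ℝ) / n) atTop (nhds 0)
  ext : ∀ n : ℕ, ∀ ε : ℝ, ε₀ < ε → g n ε = g n ε₀

/-- The `(g;n,ε)`-Bowen ball `B_n(g;x,ε)`: union of Bowen balls along all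
`Λ ⊆ {0,…,n-1}` with `#Λ ≥ n - g(n,ε)`. -/
def mistakeBowenBall (f : X → X) (g : ℕ → ℝ → ℕ) (n : ℕ) (x : X) (ε : ℝ) : Set X :=
  ⋃ Λ ∈ {Λ : Finset ℕ | Λ ⊆ Finset.range n ∧ n - g n ε ≤ Λ.card},
    bowenBallAlong f Λ x ε

/-- Almost specification property with given mistake function `g` and gap function `kg`. -/
def AlmostSpecWith (f : X → X) (g : ℕ → ℝ → ℕ) (kg : ℝ → ℕ) : Prop :=
  ∀ m : ℕ, 1 ≤ m → ∀ (ε : ℕ → ℝ) (x : ℕ → X) (nseq : ℕ → ℕ),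
    (∀ j, 1 ≤ j → j ≤ m → 0 < ε j) →
    (∀ j, 1 ≤ j → j ≤ m → kg (ε j) ≤ nseq j) →
    ∃ z : X, ∀ j, 1 ≤ j → j ≤ m →
      f^[∑ s ∈ Finset.Ico 1 j, nseq s] z ∈ mistakeBowenBall f g (nseq j) (x j) (ε j)

/-- The almost specification property. -/
def AlmostSpec (f : X → X) : Prop :=
  ∃ (g : ℕ → ℝ → ℕ) (ε₀ : ℝ) (kg : ℝ → ℕ),
    IsMistakeFun g ε₀ ∧ AlmostSpecWith f g kg

/-- `{x_n}` is a `δ`-average-pseudo-orbit of `f`. -/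
def AvgPseudoOrbit (f : X → X) (δ : ℝ) (x : ℕ → X) : Prop :=
  ∃ N : ℕ, 0 < N ∧ ∀ n : ℕ, N ≤ n → ∀ k : ℕ,
    (∑ i ∈ Finset.range n, dist (f (x (i + k))) (x (i + k + 1))) / n < δ

/-- `{x_n}` is `ε`-shadowed in average by `y`. -/
def ShadowedInAvg (f : X → X) (ε : ℝ) (x : ℕ → X) (y : X) : Prop :=
  limsup (fun n : ℕ => (∑ i ∈ Finset.range n, dist (f^[i] y) (x i)) / n) atTop < ε

/-- The average shadowing property. -/
def AvgShadowing (f : X → X) : Prop :=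
  ∀ ε : ℝ, 0 < ε → ∃ δ : ℝ, 0 < δ ∧
    ∀ x : ℕ → X, AvgPseudoOrbit f δ x → ∃ y : X, ShadowedInAvg f ε x y

/-- `{x_n}` is an asymptotic average pseudo-orbit of `f`. -/
def AsympAvgPseudoOrbit (f : X → X) (x : ℕ → X) : Prop :=
  Tendsto (fun n : ℕ => (∑ i ∈ Finset.range n, dist (f (x i)) (x (i + 1))) / n)
    atTop (nhds 0)

/-- `{x_n}` is asymptotically shadowed in average by `y`. -/
def AsympShadowedInAvg (f : X → X) (x : ℕ → X) (y : X) : Prop :=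
  Tendsto (fun n : ℕ => (∑ i ∈ Finset.range n, dist (f^[i] y) (x i)) / n)
    atTop (nhds 0)

/-- The asymptotic average shadowing property. -/
def AsympAvgShadowing (f : X → X) : Prop :=
  ∀ x : ℕ → X, AsympAvgPseudoOrbit f x → ∃ y : X, AsympShadowedInAvg f x y

/-- An infinite `δ`-pseudo-orbit. -/
def PseudoOrbit (f : X → X) (δ : ℝ) (x : ℕ → X) : Prop :=
  ∀ i : ℕ, dist (f (x i)) (x (i + 1)) < δ

/-- There exists a finite `δ`-pseudo-orbit of length `n` from `x` to `y`. -/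
def FinChain (f : X → X) (δ : ℝ) (n : ℕ) (x y : X) : Prop :=
  ∃ c : ℕ → X, c 0 = x ∧ c n = y ∧ ∀ i < n, dist (f (c i)) (c (i + 1)) < δ

/-- Chain transitivity. -/
def ChainTransitive (f : X → X) : Prop :=
  ∀ δ : ℝ, 0 < δ → ∀ x y : X, ∃ n : ℕ, 0 < n ∧ FinChain f δ n x y

/-- Chain mixing. -/
def ChainMixing (f : X → X) : Prop :=
  ∀ δ : ℝ, 0 < δ → ∀ x y : X, ∃ N : ℕ, 0 < N ∧ ∀ n : ℕ, N ≤ n → FinChain f δ n x y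

/-- The shadowing property. -/
def Shadowing (f : X → X) : Prop :=
  ∀ ε : ℝ, 0 < ε → ∃ δ : ℝ, 0 < δ ∧
    ∀ x : ℕ → X, PseudoOrbit f δ x → ∃ z : X, ∀ i : ℕ, dist (f^[i] z) (x i) < ε

/-- The limit shadowing property. -/
def LimitShadowing (f : X → X) : Prop :=
  ∀ x : ℕ → X, Tendsto (fun i : ℕ => dist (f (x i)) (x (i + 1))) atTop (nhds 0) →
    ∃ z : X, Tendsto (fun i : ℕ => dist (f^[i] z) (x i)) atTop (nhds 0)

/-- Topological transitivity. -/
def TopTransitive {Y : Type*} [TopologicalSpace Y] (f : Y → Y) : Prop :=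
  ∀ U V : Set Y, IsOpen U → IsOpen V → U.Nonempty → V.Nonempty →
    ∃ n : ℕ, 0 < n ∧ (f^[n] '' U ∩ V).Nonempty

/-- Total transitivity. -/
def TotallyTransitive {Y : Type*} [TopologicalSpace Y] (f : Y → Y) : Prop :=
  ∀ n : ℕ, 1 ≤ n → TopTransitive f^[n]

/-- Topological weak mixing: `f × f` is transitive. -/
def WeaklyMixing {Y : Type*} [TopologicalSpace Y] (f : Y → Y) : Prop :=
  TopTransitive (Prod.map f f)

/-- Topological mixing. -/
def TopMixing {Y : Type*} [TopologicalSpace Y] (f : Y → Y) : Prop :=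
  ∀ U V : Set Y, IsOpen U → IsOpen V → U.Nonempty → V.Nonempty →
    ∃ N : ℕ, 0 < N ∧ ∀ n : ℕ, N ≤ n → (f^[n] '' U ∩ V).Nonempty

/-- The forward orbit of a point. -/
def fOrbit (f : X → X) (x : X) : Set X := Set.range fun n : ℕ => f^[n] x

/-- `x` is a minimal point of `f`: every point of the orbit closure of `x`
has orbit dense in that orbit closure. -/
def MinimalPoint (f : X → X) (x : X) : Prop :=
  ∀ y ∈ closure (fOrbit f x), closure (fOrbit f x) ⊆ closure (fOrbit f y)

variable [MeasurableSpace X]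

/-- `μ` is an `f`-invariant Borel probability measure. -/
def InvariantProb (f : X → X) (μ : Measure X) : Prop :=
  IsProbabilityMeasure μ ∧ ∀ B : Set X, MeasurableSet B → μ (f ⁻¹' B) = μ B

/-- A set is universally null if it has measure zero for every invariant
probability measure. -/
def UnivNull (f : X → X) (U : Set X) : Prop :=
  ∀ μ : Measure X, InvariantProb f μ → μ U = 0

/-- The measure center: complement of the union of all universally null open sets. -/
def measureCenter (f : X → X) : Set X :=
  (⋃ U ∈ {U : Set X | IsOpen U ∧ UnivNull f U}, U)ᶜ

/-- `μ` has full support. -/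
def FullSupport (μ : Measure X) : Prop :=
  ∀ U : Set X, IsOpen U → U.Nonempty → 0 < μ U

end Defs

section Visits

variable {X : Type*} [MetricSpace X]

/-- The set of visiting times `N(x,U)`. -/
def visitTimes (f : X → X) (x : X) (U : Set X) : Set ℕ :=
  {n : ℕ | 0 < n ∧ f^[n] x ∈ U}

/-- `η(n,U) = max_{x ∈ X} #(N(x,U) ∩ {0,…,n-1})`. -/
noncomputable def eta (f : X → X) (U : Set X) (n : ℕ) : ℕ :=
  sSup {k : ℕ | ∃ x : X, k = (visitTimes f x U ∩ Set.Iio n).ncard}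

/-- The visit frequency `ξ(U) = inf_{n>0} η(n,U)/n`. -/
noncomputable def xi (f : X → X) (U : Set X) : ℝ :=
  ⨅ n : ℕ, (eta f U (n + 1) : ℝ) / (n + 1)

/-- `J ⊆ ℕ` has asymptotic density `a`. -/
def HasDensity (J : Set ℕ) (a : ℝ) : Prop :=
  Tendsto (fun n : ℕ => ((J ∩ Set.Iio n).ncard : ℝ) / n) atTop (nhds a)

/-- Upper asymptotic density of a set of naturals. -/
noncomputable def upperDensity (J : Set ℕ) : ℝ :=
  limsup (fun n : ℕ => ((J ∩ Set.Iio n).ncard : ℝ) / n) atTop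

end Visits

/-!
A proximal compact system has a fixed point `p`: `x ↦ dist (f x) x` attains its minimum, and
proximality of `x` and `f x` makes it arbitrarily small. Then `δ_p` is the unique invariant
measure, so by Oxtoby's uniform ergodic theorem the Birkhoff averages of `y ↦ min (dist y p) ε`
tend to `0` uniformly: every orbit spends a uniformly vanishing proportion of its time `ε`-far
from `p`. The largest number of such times before `n` is then a mistake function, for which the
single point `p` traces every finite family of orbit segments.
-/

open scoped NNReal Finset

section Proximal

variable {X : Type*} [MetricSpace X] [CompactSpace X] {f : X → X}

theorem exists_isFixedPt_of_liminf_dist_eq_zero (hf : Continuous f) {x : X}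
    (hx : liminf (fun n : ℕ => dist (f^[n] x) (f^[n] (f x))) atTop = 0) :
    ∃ p, Function.IsFixedPt f p := by
  obtain ⟨p, -, hmin⟩ := isCompact_univ.exists_isMinOn ⟨x, mem_univ x⟩
    (hf.dist continuous_id).continuousOn
  refine ⟨p, dist_le_zero.1 (not_lt.1 fun hpos => ?_)⟩
  have hbdd : IsCoboundedUnder (· ≥ ·) atTop fun n : ℕ => dist (f^[n] x) (f^[n] (f x)) :=
    isCoboundedUnder_ge_of_le atTop fun _ =>
      dist_le_diam_of_mem isCompact_univ.isBounded (mem_univ _) (mem_univ _)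
  obtain ⟨n, hn⟩ := (frequently_lt_of_liminf_lt hbdd (hx.trans_lt hpos)).exists
  rw [← Function.iterate_succ_apply, Function.iterate_succ_apply', dist_comm] at hn
  exact (hmin (mem_univ (f^[n] x))).not_gt hn

end Proximal

section InvariantMeasure

variable {X : Type*} [MeasurableSpace X] {f : X → X}

theorem invariantProb_of_map_eq (hf : Measurable f) {μ : Measure X}
    [IsProbabilityMeasure μ] (h : μ.map f = μ) : InvariantProb f μ :=
  ⟨‹_›, fun B hB => by rw [← Measure.map_apply hf hB, h]⟩

theorem invariantProb_dirac_of_isFixedPt (hf : Measurable f) {p : X}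
    (hp : Function.IsFixedPt f p) : InvariantProb f (Measure.dirac p) :=
  invariantProb_of_map_eq hf (by rw [Measure.map_dirac' hf, hp.eq])

end InvariantMeasure

section EmpiricalMeasure

variable {X : Type*} [MeasurableSpace X] {f : X → X}

noncomputable def empiricalMeasure (f : X → X) (n : ℕ) (x : X) : FiniteMeasure X :=
  ⟨(n : ℝ≥0)⁻¹ • ∑ k ∈ Finset.range n, Measure.dirac (f^[k] x), by infer_instance⟩

theorem mass_empiricalMeasure {n : ℕ} (hn : n ≠ 0) (x : X) :
    (empiricalMeasure f n x).mass = 1 := by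
  simp [empiricalMeasure, FiniteMeasure.mass, ENNReal.smul_def, hn]

theorem integral_empiricalMeasure [MeasurableSingletonClass X] (φ : X → ℝ) (n : ℕ) (x : X) :
    ∫ y, φ y ∂(empiricalMeasure f n x : Measure X) = birkhoffAverage ℝ f φ n x := by
  rw [empiricalMeasure, FiniteMeasure.toMeasure_mk, integral_smul_nnreal_measure,
    integral_finsetSum_measure fun _ _ => integrable_dirac enorm_lt_top]
  simp [birkhoffAverage, birkhoffSum, integral_dirac, NNReal.smul_def]

end EmpiricalMeasure

theorem birkhoffAverage_comp_apply {α M : Type*} [AddCommMonoid M] (R : Type*) [DivisionSemiring R]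
    [Module R M] (f : α → α) (φ : α → M) (n : ℕ) (x : α) :
    birkhoffAverage R f (φ ∘ f) n x = birkhoffAverage R f φ n (f x) := by
  simp only [birkhoffAverage, birkhoffSum, Function.comp_apply, ← Function.iterate_succ_apply',
    Function.iterate_succ_apply]

section UniqueErgodicity

variable {X : Type*} [MetricSpace X] [MeasurableSpace X] [BorelSpace X] {f : X → X}

theorem invariantProb_of_mapClusterPt_empiricalMeasure (hf : Continuous f) {ι : Type*}
    {l : Filter ι} {n : ι → ℕ} (hn : Tendsto n l atTop) (x : ι → X) {ν : FiniteMeasure X}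
    (hν : ν.mass = 1) (hcl : MapClusterPt ν l fun i => empiricalMeasure f (n i) (x i)) :
    InvariantProb f ν := by
  have : IsProbabilityMeasure (ν : Measure X) :=
    ⟨by rw [← FiniteMeasure.ennreal_mass, hν, ENNReal.coe_one]⟩
  refine invariantProb_of_map_eq hf.measurable
    (ext_of_forall_integral_eq_of_IsFiniteMeasure fun φ => ?_)
  rw [integral_map hf.aemeasurable φ.continuous.aestronglyMeasurable]
  set ψ := φ.compContinuous ⟨f, hf⟩
  set F : FiniteMeasure X → ℝ := fun ν' => ∫ y, ψ y ∂ν' - ∫ y, φ y ∂ν'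
  have hF : Continuous F := by fun_prop
  have hlim : Tendsto (fun i => F (empiricalMeasure f (n i) (x i))) l (𝓝 0) := by
    refine squeeze_zero_norm (fun i => ?_)
      ((tendsto_const_div_atTop_nhds_zero_nat (2 * ‖φ‖)).comp hn)
    simp only [F, integral_empiricalMeasure]
    rw [← dist_eq_norm, show ⇑ψ = φ ∘ f from rfl, birkhoffAverage_comp_apply,
      dist_birkhoffAverage_apply_birkhoffAverage]
    exact div_le_div_of_nonneg_right (φ.dist_le_two_norm _ _) (Nat.cast_nonneg _)
  have hcl' := hcl.tendsto_comp (hF.tendsto ν)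
  have hFν : F ν = 0 := eq_of_nhds_neBot (hcl'.neBot.mono (inf_le_inf_left _ hlim))
  exact sub_eq_zero.1 hFν

theorem tendstoUniformly_birkhoffAverage_of_unique_invariantProb [CompactSpace X]
    (hf : Continuous f) {μ : Measure X} [IsFiniteMeasure μ]
    (hμ : ∀ ν, InvariantProb f ν → ν = μ) (φ : C(X, ℝ)) :
    TendstoUniformly (birkhoffAverage ℝ f φ) (fun _ => ∫ x, φ x ∂μ) atTop := by
  have hE : Tendsto (fun q : ℕ × X => empiricalMeasure f q.1 q.2) (atTop ×ˢ ⊤)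
      (𝓝 ⟨μ, ‹_›⟩) := by
    refine (isCompact_setOfPred_finiteMeasure_eq_of_compactSpace X 1)
      |>.tendsto_nhds_of_unique_mapClusterPt ?_ fun ν hν hcl => FiniteMeasure.toMeasure_injective ?_
    · filter_upwards [tendsto_fst.eventually (eventually_ne_atTop 0)] with q hq
      exact mass_empiricalMeasure hq _
    · exact hμ ν (invariantProb_of_mapClusterPt_empiricalMeasure hf tendsto_fst Prod.snd hν hcl)
  have hint := ((FiniteMeasure.continuous_integral_continuousMap φ).tendsto _).comp hE
  simp only [Function.comp_def, integral_empiricalMeasure] at hint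
  rw [tendstoUniformly_iff_tendsto]
  exact (tendsto_const_nhds.prodMk_nhds hint).mono_right (nhds_le_uniformity _)

end UniqueErgodicity

section FarTimes

variable {X : Type*} [MetricSpace X] {f : X → X}

open scoped Classical in
noncomputable def farTimes (f : X → X) (p : X) (ε : ℝ) (n : ℕ) (x : X) : Finset ℕ :=
  (Finset.range n).filter fun s => ε ≤ dist (f^[s] x) p

theorem mem_farTimes {p : X} {ε : ℝ} {n s : ℕ} {x : X} :
    s ∈ farTimes f p ε n x ↔ s < n ∧ ε ≤ dist (f^[s] x) p := by
  simp [farTimes]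

theorem farTimes_subset_range (p : X) (ε : ℝ) (n : ℕ) (x : X) :
    farTimes f p ε n x ⊆ Finset.range n :=
  Finset.filter_subset _ _

theorem card_farTimes_le (p : X) (ε : ℝ) (n : ℕ) (x : X) : #(farTimes f p ε n x) ≤ n :=
  (Finset.card_le_card (farTimes_subset_range p ε n x)).trans_eq (Finset.card_range n)

theorem farTimes_subset_succ (p : X) (ε : ℝ) (n : ℕ) (x : X) :
    farTimes f p ε n x ⊆ farTimes f p ε (n + 1) x := fun s hs => by
  rw [mem_farTimes] at hs ⊢
  exact ⟨hs.1.trans n.lt_succ_self, hs.2⟩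

theorem mul_card_farTimes_le_birkhoffSum (p : X) (ε : ℝ) (n : ℕ) (x : X) :
    ε * #(farTimes f p ε n x) ≤ birkhoffSum f (fun y => min (dist y p) ε) n x := by
  classical
  rw [farTimes, Finset.card_filter, Nat.cast_sum, Finset.mul_sum, birkhoffSum]
  refine Finset.sum_le_sum fun _ _ => ?_
  split_ifs with h
  · simp [h]
  · rw [Nat.cast_zero, mul_zero]
    exact le_min dist_nonneg (dist_nonneg.trans (not_le.1 h).le)

theorem eventually_card_farTimes_le [CompactSpace X] [MeasurableSpace X] [BorelSpace X]
    (hf : Continuous f) {p : X} (hp : ∀ ν, InvariantProb f ν → ν = Measure.dirac p)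
    {ε δ : ℝ} (hε : 0 < ε) (hδ : 0 < δ) :
    ∀ᶠ n in atTop, ∀ x, (#(farTimes f p ε n x) : ℝ) ≤ δ * n := by
  have hunif := tendstoUniformly_birkhoffAverage_of_unique_invariantProb hf hp
    ⟨fun y => min (dist y p) ε, by fun_prop⟩
  rw [Metric.tendstoUniformly_iff] at hunif
  filter_upwards [hunif (ε * δ) (by positivity), eventually_gt_atTop 0] with n hn hn0 x
  have hBA := hn x
  simp only [ContinuousMap.coe_mk, integral_dirac, dist_self, min_eq_left hε.le] at hBA
  rw [dist_comm, Real.dist_eq, sub_zero, birkhoffAverage, smul_eq_mul, ← div_eq_inv_mul,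
    abs_lt, div_lt_iff₀ (by positivity)] at hBA
  have hcount := mul_card_farTimes_le_birkhoffSum (f := f) p ε n x
  exact le_of_mul_le_mul_left (by linarith) hε

/-- Truncating `ε` at `1` makes `maxFarCount f p n ε` constant in `ε > 1`, as a mistake function
with threshold `1` must be. -/
noncomputable def maxFarCount (f : X → X) (p : X) (n : ℕ) (ε : ℝ) : ℕ :=
  ⨆ x, #(farTimes f p (min ε 1) n x)

theorem card_farTimes_le_maxFarCount (p : X) (n : ℕ) (ε : ℝ) (x : X) :
    #(farTimes f p (min ε 1) n x) ≤ maxFarCount f p n ε :=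
  le_ciSup ⟨n, Set.forall_mem_range.2 fun x => card_farTimes_le p _ n x⟩ x

theorem isMistakeFun_maxFarCount {p : X}
    (h : ∀ ε > 0, ∀ δ > 0, ∀ᶠ n in atTop, ∀ x, (#(farTimes f p ε n x) : ℝ) ≤ δ * n) :
    IsMistakeFun (maxFarCount f p) 1 where
  pos := one_pos
  mono n ε _ _ := ciSup_le' fun x =>
    (Finset.card_le_card (farTimes_subset_succ p _ n x)).trans
      (card_farTimes_le_maxFarCount p (n + 1) ε x)
  small ε hε _ := by
    have hbound : ∀ δ > 0, ∀ᶠ n : ℕ in atTop, (maxFarCount f p n ε : ℝ) / n ≤ δ := fun δ hδ =>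
      (h _ (lt_min hε one_pos) δ hδ).mono fun n hn => div_le_of_le_mul₀ n.cast_nonneg hδ.le <|
        (Nat.cast_le.2 (ciSup_le' fun x => Nat.le_floor (hn x))).trans
          (Nat.floor_le (by positivity))
    refine tendsto_order.2 ⟨fun a ha => Eventually.of_forall fun n => ha.trans_le (by positivity),
      fun a ha => (hbound (a / 2) (half_pos ha)).mono fun n hn => hn.trans_lt (half_lt_self ha)⟩
  ext n ε hε := by simp only [maxFarCount, min_eq_right hε.le, min_self]

theorem mem_mistakeBowenBall_maxFarCount {p : X} (hp : Function.IsFixedPt f p) (n : ℕ) (x : X)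
    (ε : ℝ) : p ∈ mistakeBowenBall f (maxFarCount f p) n x ε := by
  refine mem_iUnion₂.2 ⟨Finset.range n \ farTimes f p (min ε 1) n x,
    ⟨Finset.sdiff_subset, ?_⟩, fun s hs => ?_⟩
  · rw [Finset.card_sdiff_of_subset (farTimes_subset_range p _ n x), Finset.card_range]
    exact Nat.sub_le_sub_left (card_farTimes_le_maxFarCount p n ε x) n
  · obtain ⟨hs, hnear⟩ := Finset.mem_sdiff.1 hs
    rw [(hp.iterate s).eq]
    exact (not_le.1 fun h => hnear (mem_farTimes.2 ⟨Finset.mem_range.1 hs, h⟩)).trans_le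
      (min_le_left _ _)

theorem almostSpecWith_maxFarCount {p : X} (hp : Function.IsFixedPt f p) (kg : ℝ → ℕ) :
    AlmostSpecWith f (maxFarCount f p) kg := fun _ _ _ _ _ _ _ =>
  ⟨p, fun j _ _ => by
    rw [(hp.iterate _).eq]
    exact mem_mistakeBowenBall_maxFarCount hp _ _ _⟩

end FarTimes

/-- Every uniquely ergodic and proximal compact dynamical system
has the almost specification property. -/
theorem uniquelyErgodic_proximal_almostSpec
    {X : Type*} [MetricSpace X] [CompactSpace X] [MeasurableSpace X] [BorelSpace X]
    (f : X → X) (hf : Continuous f)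
    (huniq : ∃! μ : Measure X, InvariantProb f μ)
    (hprox : ∀ x y : X,
      liminf (fun n : ℕ => dist (f^[n] x) (f^[n] y)) atTop = 0) :
    AlmostSpec f := by
  obtain ⟨μ, ⟨hμ, -⟩, hμ_unique⟩ := huniq
  obtain ⟨x⟩ := nonempty_of_isProbabilityMeasure μ
  obtain ⟨p, hp⟩ := exists_isFixedPt_of_liminf_dist_eq_zero hf (hprox x (f x))
  have hdirac : ∀ ν, InvariantProb f ν → ν = Measure.dirac p := fun ν hν =>
    (hμ_unique ν hν).trans (hμ_unique _ (invariantProb_dirac_of_isFixedPt hf.measurable hp)).symm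
  exact ⟨maxFarCount f p, 1, fun _ => 0,
    isMistakeFun_maxFarCount fun _ hε _ hδ => eventually_card_farTimes_le hf hdirac hε hδ,
    almostSpecWith_maxFarCount hp _⟩
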